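/- There exist binary joint distributions p_{X,Y} and p_{X,Z} with equal Y- and Z-marginals (p_Y = p_Z) such that P_{X|Y} > P_{X|Z} but I(X:Y) < I(X:Z). Concretely, p_{X,Y} = [[0.48, 0.11],[0.11, 0.30]] and p_{X,Z} = [[0.21, 0.38],[0.38, 0.03]] satisfy p_Y = p_Z = (0.59, 0.41), P_{X|Y} = 0.78 > 0.76 = P_{X|Z}, and I(X:Y) < 0.23 < 0.26 < I(X:Z) (logarithms base 2). -/

import Mathlib

/-!
Both matrices are symmetric with marginals `(0.59, 0.41)`, so `I2` has three distinct terms.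
Their weights are hundredths, so `100 * I2` is `logb 2` of an explicit rational number, and the
bounds `I2 < 0.23` and `0.26 < I2` become comparisons of rationals with `2 ^ 23` and `2 ^ 26`.
-/

noncomputable section

/-- Guessing probability `Σ_y max_x q x y` of a 2×2 joint distribution. -/
def Pguess (q : Fin 2 → Fin 2 → ℝ) : ℝ :=
  max (q 0 0) (q 1 0) + max (q 0 1) (q 1 1)

/-- Mutual information (base 2) of a 2×2 joint distribution. -/
def I2 (q : Fin 2 → Fin 2 → ℝ) : ℝ :=
  ∑ x : Fin 2, ∑ y : Fin 2,
    q x y * Real.logb 2 (q x y / ((q x 0 + q x 1) * (q 0 y + q 1 y)))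

open Real

lemma I2_symmetric (a b c : ℝ) :
    I2 ![![a, b], ![b, c]] = a * logb 2 (a / (a + b) ^ 2)
      + 2 * b * logb 2 (b / ((a + b) * (b + c))) + c * logb 2 (c / (b + c) ^ 2) := by
  simp only [I2, Fin.sum_univ_two, Matrix.cons_val_zero, Matrix.cons_val_one, sq]
  rw [mul_comm (b + c) (a + b)]
  ring

lemma logb_pow_mul_pow_mul_pow {b x y z : ℝ} (hx : x ≠ 0) (hy : y ≠ 0) (hz : z ≠ 0)
    (k l m : ℕ) :
    logb b (x ^ k * y ^ l * z ^ m) = k * logb b x + l * logb b y + m * logb b z := by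
  rw [logb_mul (by positivity) (by positivity), logb_mul (by positivity) (by positivity),
    logb_pow, logb_pow, logb_pow]

lemma I2_exampleY_lt : I2 ![![0.48, 0.11], ![0.11, 0.30]] < 0.23 := by
  have h : logb 2 ((4800 / 3481 : ℝ) ^ 48 * (1100 / 2419) ^ 22 * (3000 / 1681) ^ 30) < 23 :=
    (logb_lt_iff_lt_rpow one_lt_two (by positivity)).2 (by norm_num)
  rw [logb_pow_mul_pow_mul_pow (by norm_num) (by norm_num) (by norm_num)] at h
  rw [I2_symmetric]
  norm_num
  linarith

lemma lt_I2_exampleZ : (0.26 : ℝ) < I2 ![![0.21, 0.38], ![0.38, 0.03]] := by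
  have h : 26 < logb 2 ((2100 / 3481 : ℝ) ^ 21 * (3800 / 2419) ^ 76 * (300 / 1681) ^ 3) :=
    (lt_logb_iff_rpow_lt one_lt_two (by positivity)).2 (by norm_num)
  rw [logb_pow_mul_pow_mul_pow (by norm_num) (by norm_num) (by norm_num)] at h
  rw [I2_symmetric]
  norm_num
  linarith

theorem counterexample_monotonicity :
    ∃ qY qZ : Fin 2 → Fin 2 → ℝ,
      qY = ![![0.48, 0.11], ![0.11, 0.30]] ∧
      qZ = ![![0.21, 0.38], ![0.38, 0.03]] ∧
      (qY 0 0 + qY 1 0 = qZ 0 0 + qZ 1 0) ∧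
      (qY 0 1 + qY 1 1 = qZ 0 1 + qZ 1 1) ∧
      Pguess qY = 0.78 ∧ Pguess qZ = 0.76 ∧
      Pguess qZ < Pguess qY ∧
      I2 qY < 0.23 ∧ (0.26 : ℝ) < I2 qZ ∧
      I2 qY < I2 qZ := by
  refine ⟨_, _, rfl, rfl, by norm_num, by norm_num, by norm_num [Pguess], by norm_num [Pguess],
    by norm_num [Pguess], I2_exampleY_lt, lt_I2_exampleZ, ?_⟩
  linarith [I2_exampleY_lt, lt_I2_exampleZ]
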